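/- arXiv:2511.16608 — 2 statements merged into one kernel-verified Lean document; each statement's English description precedes it below -/
import Mathlib

section
/- Let X and Y be finite ranked posets with rank functions ρ_X and ρ_Y, and let σ : X → Y be an order-preserving, rank-increasing, strongly surjective function. For any x ∈ X and y ∈ Y, viewed as elements of the non-Hausdorff mapping cylinder Cyl(σ), the element y covers x in Cyl(σ) if and only if σ(x) = y and ρ_X(x) = ρ_Y(y). -/
namespace SFSPaper

variable {α β : Type*}

/-- `ρ` is a rank function: it increases by exactly one along covering relations. -/
def IsRankFunction [Preorder α] (ρ : α → ℤ) : Prop :=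
  ∀ ⦃z z' : α⦄, z ⋖ z' → ρ z' = ρ z + 1

/-- `σ` is rank-increasing with respect to the rank functions `ρX` and `ρY`. -/
def RankIncreasing [Preorder α] [Preorder β] (ρX : α → ℤ) (ρY : β → ℤ) (σ : α → β) : Prop :=
  ∀ x : α, ρX x ≤ ρY (σ x)

/-- `σ` is strongly surjective. -/
def StronglySurjective [Preorder α] [Preorder β] (ρX : α → ℤ) (ρY : β → ℤ) (σ : α → β) : Prop :=
  Function.Surjective σ ∧
    ∀ (x : α) (y : β), σ x ≤ y → ∃ x' : α, x ≤ x' ∧ ρX x' = ρY y ∧ σ x' = y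

/-- The alternating sum `∑_{z ≤ w ≤ z'} (-1)^(ρ w)`. -/
noncomputable def intervalEulerSum [Preorder α] (ρ : α → ℤ) (z z' : α) : ℚ :=
  ∑ᶠ (w : α) (_ : z ≤ w ∧ w ≤ z'), (-1 : ℚ) ^ ρ w

/-- A poset is lower Eulerian with respect to `ρ` if `ρ` is a rank function, there is a
unique minimal (i.e. least) element, and every nontrivial interval has as many elements of even
rank as of odd rank. -/
def LowerEulerian [PartialOrder α] (ρ : α → ℤ) : Prop :=
  IsRankFunction ρ ∧ (∃ b : α, ∀ z : α, b ≤ z) ∧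
    ∀ z z' : α, z < z' → intervalEulerSum ρ z z' = 0

/-- Eulerian: lower Eulerian with a unique maximal element. -/
def Eulerian [PartialOrder α] (ρ : α → ℤ) : Prop :=
  LowerEulerian ρ ∧ ∃ t : α, ∀ z : α, z ≤ t

/-- Strong formal subdivision. -/
def StrongFormalSubdivision [PartialOrder α] [PartialOrder β]
    (ρX : α → ℤ) (ρY : β → ℤ) (σ : α → β) : Prop :=
  Monotone σ ∧ RankIncreasing ρX ρY σ ∧ StronglySurjective ρX ρY σ ∧
    ∀ (x : α) (y : β), σ x ≤ y →
      (∑ᶠ (x' : α) (_ : x ≤ x' ∧ σ x' = y), (-1 : ℚ) ^ (ρY y - ρX x')) = 1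

/-- `q` is join-admissible: every `z` has a join with `q`. -/
def JoinAdmissible [Preorder α] (q : α) : Prop :=
  ∀ z : α, ∃ j : α, IsLeast {w : α | z ≤ w ∧ q ≤ w} j

/-- The rank of a poset: the maximal length of a chain `z_0 < z_1 < ⋯ < z_s`. -/
noncomputable def posetRank (α : Type*) [Preorder α] : ℕ :=
  sSup {n : ℕ | ∃ c : Fin (n + 1) → α, StrictMono c}

/-- A poset is graded if all of its maximal chains have the same length (cardinality). -/
def GradedPoset (α : Type*) [Preorder α] : Prop :=
  ∀ s t : Set α, IsMaxChain (· ≤ ·) s → IsMaxChain (· ≤ ·) t → s.ncard = t.ncard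


variable {α β : Type*}

/-- The order relation of the non-Hausdorff mapping cylinder of `σ : α → β` on `α ⊕ β`. -/
def cylLE [LE α] [LE β] (σ : α → β) : α ⊕ β → α ⊕ β → Prop
  | Sum.inl x, Sum.inl x' => x ≤ x'
  | Sum.inl x, Sum.inr y => σ x ≤ y
  | Sum.inr _, Sum.inl _ => False
  | Sum.inr y, Sum.inr y' => y ≤ y'

/-- The non-Hausdorff mapping cylinder of an order-preserving map `σ : α → β`, as a
partial order on `α ⊕ β`. -/
def cylPartialOrder [PartialOrder α] [PartialOrder β] (σ : α → β) (hσ : Monotone σ) :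
    PartialOrder (α ⊕ β) where
  le := cylLE σ
  lt a b := cylLE σ a b ∧ ¬ cylLE σ b a
  lt_iff_le_not_ge _ _ := Iff.rfl
  le_refl := by rintro (x | y) <;> simp [cylLE]
  le_trans := by
    rintro (x | y) (x' | y') (x'' | y'') hab hbc <;> simp only [cylLE] at * <;>
      first
        | exact hab.trans hbc
        | exact (hσ hab).trans hbc
  le_antisymm := by
    rintro (x | y) (x' | y') hab hba <;> simp only [cylLE] at *
    · exact congrArg Sum.inl (le_antisymm hab hba)
    · exact congrArg Sum.inr (le_antisymm hab hba)

/-- The rank function on the mapping cylinder: `ρX` on `X` and `ρY + 1` on `Y`. -/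
def cylRank (ρX : α → ℤ) (ρY : β → ℤ) : α ⊕ β → ℤ :=
  Sum.elim ρX fun y => ρY y + 1


/-!
In `Cyl(σ)` no element of `Y` lies strictly between `x` and `σ x`, so `y` covers `x` exactly when
`σ x = y` and `x` is maximal in the fibre `σ⁻¹(y)`. Strong surjectivity puts an element of rank
`ρ_Y(y)` above `x` in that fibre, while rank-increase bounds the ranks in the fibre by `ρ_Y(y)`;
as a rank function on a finite poset is strictly monotone, the maximal elements of the fibre are
exactly those of rank `ρ_Y(y)`.
-/

theorem IsRankFunction.strictMono [PartialOrder α] [IsStronglyAtomic α] [WellFoundedGT α]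
    {ρ : α → ℤ} (hρ : IsRankFunction ρ) : StrictMono ρ := by
  intro z z' hzz'
  induction z using WellFoundedGT.induction with
  | _ z ih =>
    obtain ⟨w, hzw, hwz'⟩ := hzz'.exists_covby_le
    have hρw : ρ w = ρ z + 1 := hρ hzw
    rcases eq_or_lt_of_le hwz' with rfl | hwz'
    · omega
    · linarith [ih w hzw.lt hwz']

theorem cyl_inl_covBy_inr_iff [PartialOrder α] [PartialOrder β] {σ : α → β} (hσ : Monotone σ)
    {x : α} {y : β} :
    @CovBy (α ⊕ β) (cylPartialOrder σ hσ).toPreorder.toLT (Sum.inl x) (Sum.inr y) ↔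
      Maximal (σ · = y) x := by
  constructor
  · rintro ⟨⟨hxy, -⟩, hcov⟩
    have hσx : σ x = y := by
      by_contra hne
      have hlt : σ x < y := lt_of_le_of_ne hxy hne
      exact hcov (c := Sum.inr (σ x)) ⟨le_rfl, id⟩ ⟨hlt.le, hlt.not_ge⟩
    refine ⟨hσx, fun x' hσx' hxx' => ?_⟩
    by_contra hx'x
    exact hcov (c := Sum.inl x') ⟨hxx', hx'x⟩ ⟨hσx'.le, id⟩
  · rintro ⟨rfl, hmax⟩
    refine ⟨⟨le_rfl, id⟩, ?_⟩
    rintro (x' | y')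
    · rintro ⟨hxx', hx'x⟩ ⟨hσx', -⟩
      exact hx'x (hmax (le_antisymm hσx' (hσ hxx')) hxx')
    · rintro ⟨hxy', -⟩ ⟨-, hy'x⟩
      exact hy'x hxy'

theorem maximal_fiber_iff_rank_eq [PartialOrder α] [Preorder β] {ρX : α → ℤ} {ρY : β → ℤ}
    {σ : α → β} (hρX : StrictMono ρX) (hrank : RankIncreasing ρX ρY σ)
    (hss : StronglySurjective ρX ρY σ) {x : α} {y : β} :
    Maximal (σ · = y) x ↔ σ x = y ∧ ρX x = ρY y := by
  constructor
  · rintro ⟨rfl, hmax⟩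
    obtain ⟨x', hxx', hρx', hσx'⟩ := hss.2 x (σ x) le_rfl
    rw [← hxx'.antisymm (hmax hσx' hxx')] at hρx'
    exact ⟨rfl, hρx'⟩
  · rintro ⟨rfl, hρx⟩
    refine ⟨rfl, fun x' hσx' hxx' => ?_⟩
    by_contra hx'x
    have hρlt : ρX x < ρX x' := hρX (hxx'.lt_of_not_ge hx'x)
    linarith [hrank x', congrArg ρY hσx']

theorem covBy_in_cyl_iff_general {X Y : Type*} [PartialOrder X] [PartialOrder Y] [Finite X]
    (ρX : X → ℤ) (ρY : Y → ℤ) (hρX : IsRankFunction ρX)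
    (σ : X → Y) (hmono : Monotone σ) (hrank : RankIncreasing ρX ρY σ)
    (hss : StronglySurjective ρX ρY σ) (x : X) (y : Y) :
    @CovBy (X ⊕ Y) (cylPartialOrder σ hmono).toPreorder.toLT (Sum.inl x) (Sum.inr y) ↔
      σ x = y ∧ ρX x = ρY y :=
  (cyl_inl_covBy_inr_iff hmono).trans (maximal_fiber_iff_rank_eq hρX.strictMono hrank hss)

/-- In the non-Hausdorff mapping cylinder of a strongly surjective,
order-preserving, rank-increasing map `σ`, an element `y ∈ Y` covers `x ∈ X` if and only if
`σ(x) = y` and `ρ_X(x) = ρ_Y(y)`. -/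
theorem covBy_in_cyl_iff {X Y : Type*} [PartialOrder X] [PartialOrder Y] [Finite X] [Finite Y]
    (ρX : X → ℤ) (ρY : Y → ℤ) (hρX : IsRankFunction ρX) (hρY : IsRankFunction ρY)
    (σ : X → Y) (hmono : Monotone σ) (hrank : RankIncreasing ρX ρY σ)
    (hss : StronglySurjective ρX ρY σ) (x : X) (y : Y) :
    @CovBy (X ⊕ Y) (cylPartialOrder σ hmono).toPreorder.toLT (Sum.inl x) (Sum.inr y) ↔
      σ x = y ∧ ρX x = ρY y :=
  covBy_in_cyl_iff_general ρX ρY hρX σ hmono hrank hss x y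

end SFSPaper
end

section
/- Let σ : X → Y be a strong formal subdivision between finite lower Eulerian posets X and Y with rank functions ρ_X and ρ_Y. Then the non-Hausdorff mapping cylinder Cyl(σ), equipped with the rank function ρ_{Cyl(σ)} equal to ρ_X on X and to ρ_Y + 1 on Y, is a lower Eulerian poset whose unique minimal element is 0̂_X. Moreover, the element 0̂_Y ∈ Y ⊆ Cyl(σ) is join-admissible and distinct from the minimal element of Cyl(σ); the set {z ∈ Cyl(σ) : 0̂_Y ≤ z} is exactly Y; for every x ∈ X the join x ∨ 0̂_Y in Cyl(σ) equals σ(x); and for every y ∈ Y, y ∨ 0̂_Y = y. -/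
namespace SFSPaper

variable {α β : Type*}

variable {α β : Type*}

/-! In the cylinder, `X` is a lower set and `Y` an upper set whose ranks are shifted up by one, so
covers and intervals lying inside `X` or inside `Y` are those of `X` and of `Y`; a cover `x ⋖ y`
across the two halves forces `ρ_X x = ρ_Y y` by strong surjectivity. For a mixed interval `[x, y]`
the `X`-part `{x' ≥ x | σ x' ≤ y}` is the disjoint union of the fibres of `σ` over `[σ x, y]`, and
by the subdivision identity the fibre over `y'` contributes `(-1)^{ρ_Y y'}`. Hence the `X`-part
cancels the `Y`-part, which carries the opposite sign because of the rank shift. -/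

open Set Function

theorem neg_one_zpow_mul_neg_one_zpow_sub {R : Type*} [DivisionRing R] (a b : ℤ) :
    (-1 : R) ^ a * (-1) ^ (a - b) = (-1) ^ b := by
  rw [← zpow_add₀ (neg_ne_zero.2 one_ne_zero), show a + (a - b) = b + 2 * (a - b) by ring,
    zpow_add₀ (neg_ne_zero.2 one_ne_zero), zpow_mul]
  norm_num

theorem intervalEulerSum_eq_finsum_mem_Icc [Preorder α] (ρ : α → ℤ) (z z' : α) :
    intervalEulerSum ρ z z' = ∑ᶠ w ∈ Icc z z', (-1 : ℚ) ^ ρ w :=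
  rfl

theorem StrongFormalSubdivision.finsum_neg_one_zpow_eq_intervalEulerSum [PartialOrder α]
    [PartialOrder β] [Finite α] [Finite β] {ρX : α → ℤ} {ρY : β → ℤ} {σ : α → β}
    (hσ : StrongFormalSubdivision ρX ρY σ) (x : α) (y : β) :
    ∑ᶠ x' ∈ {x' | x ≤ x' ∧ σ x' ≤ y}, (-1 : ℚ) ^ ρX x' = intervalEulerSum ρY (σ x) y := by
  let fiber (y' : β) : Set α := {x' | x ≤ x' ∧ σ x' = y'}
  have hunion : {x' | x ≤ x' ∧ σ x' ≤ y} = ⋃ y' ∈ Icc (σ x) y, fiber y' := by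
    ext x'
    simp only [fiber, mem_ofPred_eq, mem_iUnion, mem_Icc, exists_prop]
    exact ⟨fun h => ⟨σ x', ⟨hσ.1 h.1, h.2⟩, h.1, rfl⟩, fun ⟨_, ⟨_, hy⟩, hx, hσx⟩ => ⟨hx, hσx ▸ hy⟩⟩
  have hdisj : (Icc (σ x) y).PairwiseDisjoint fiber := fun _ _ _ _ hne =>
    disjoint_left.2 fun _ h₁ h₂ => hne (h₁.2.symm.trans h₂.2)
  have hfiber (y' : β) (hy' : y' ∈ Icc (σ x) y) :
      ∑ᶠ x' ∈ fiber y', (-1 : ℚ) ^ ρX x' = (-1) ^ ρY y' :=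
    calc ∑ᶠ x' ∈ fiber y', (-1 : ℚ) ^ ρX x'
        = (-1) ^ ρY y' * ∑ᶠ x' ∈ fiber y', (-1 : ℚ) ^ (ρY y' - ρX x') := by
          rw [mul_finsum_mem]
          exact finsum_mem_congr rfl fun _ _ => (neg_one_zpow_mul_neg_one_zpow_sub _ _).symm
      _ = (-1) ^ ρY y' * 1 := congrArg _ (hσ.2.2.2 x y' hy'.1)
      _ = (-1) ^ ρY y' := mul_one _
  rw [hunion, finsum_mem_biUnion hdisj (toFinite _) fun _ _ => toFinite _]
  exact finsum_mem_congr rfl hfiber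

/-- A type synonym for `α ⊕ β` carrying the cylinder order, which would otherwise clash with the
disjoint-sum order on `α ⊕ β`. -/
def Cyl [PartialOrder α] [PartialOrder β] (σ : α → β) (_ : Monotone σ) : Type _ := α ⊕ β

namespace Cyl

variable [PartialOrder α] [PartialOrder β] {σ : α → β} {hσ : Monotone σ}

instance : PartialOrder (Cyl σ hσ) := cylPartialOrder σ hσ

def inl : α ↪o Cyl σ hσ := OrderEmbedding.ofMapLEIff Sum.inl fun _ _ => Iff.rfl

def inr : β ↪o Cyl σ hσ := OrderEmbedding.ofMapLEIff Sum.inr fun _ _ => Iff.rfl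

@[elab_as_elim, induction_eliminator]
theorem ind {motive : Cyl σ hσ → Prop} (inl : ∀ x, motive (inl x)) (inr : ∀ y, motive (inr y)) :
    ∀ z, motive z
  | .inl x => inl x
  | .inr y => inr y

@[simp] theorem inl_le_inr {x : α} {y : β} : (inl x : Cyl σ hσ) ≤ inr y ↔ σ x ≤ y := Iff.rfl

@[simp] theorem not_inr_le_inl {x : α} {y : β} : ¬(inr y : Cyl σ hσ) ≤ inl x := id

@[simp] theorem inl_ne_inr {x : α} {y : β} : (inl x : Cyl σ hσ) ≠ inr y := Sum.inl_ne_inr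

@[simp] theorem inr_ne_inl {x : α} {y : β} : (inr y : Cyl σ hσ) ≠ inl x := Sum.inr_ne_inl

@[simp] theorem cylRank_inl (ρX : α → ℤ) (ρY : β → ℤ) (x : α) :
    cylRank ρX ρY (inl x : Cyl σ hσ) = ρX x := rfl

@[simp] theorem cylRank_inr (ρX : α → ℤ) (ρY : β → ℤ) (y : β) :
    cylRank ρX ρY (inr y : Cyl σ hσ) = ρY y + 1 := rfl

theorem isLowerSet_range_inl : IsLowerSet (range (inl : α ↪o Cyl σ hσ)) := by
  rintro _ b hba ⟨x, rfl⟩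
  induction b with
  | inl x' => exact mem_range_self x'
  | inr y => exact absurd hba not_inr_le_inl

theorem isUpperSet_range_inr : IsUpperSet (range (inr : β ↪o Cyl σ hσ)) := by
  rintro _ b hab ⟨y, rfl⟩
  induction b with
  | inl x => exact absurd hab not_inr_le_inl
  | inr y' => exact mem_range_self y'

theorem inl_covBy_inl_iff {x x' : α} : (inl x : Cyl σ hσ) ⋖ inl x' ↔ x ⋖ x' :=
  isLowerSet_range_inl.ordConnected.apply_covBy_apply_iff inl

theorem inr_covBy_inr_iff {y y' : β} : (inr y : Cyl σ hσ) ⋖ inr y' ↔ y ⋖ y' :=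
  isUpperSet_range_inr.ordConnected.apply_covBy_apply_iff inr

theorem isBot_inl {bX : α} (hbX : IsBot bX) (hsurj : Surjective σ) :
    IsBot (inl bX : Cyl σ hσ) := by
  intro z
  induction z with
  | inl x => exact inl.le_iff_le.2 (hbX x)
  | inr y =>
    obtain ⟨x, rfl⟩ := hsurj y
    exact inl_le_inr.2 (hσ (hbX x))

theorem setOf_inr_le_eq_range {bY : β} (hbY : IsBot bY) : {z : Cyl σ hσ | inr bY ≤ z} = range inr := by
  ext z
  induction z with
  | inl x => simp
  | inr y => simpa using hbY y

theorem isLeast_inl_join {bY : β} (hbY : IsBot bY) (x : α) :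
    IsLeast {w : Cyl σ hσ | inl x ≤ w ∧ inr bY ≤ w} (inr (σ x)) := by
  refine ⟨⟨inl_le_inr.2 le_rfl, inr.le_iff_le.2 (hbY _)⟩, fun w ⟨hxw, hbw⟩ => ?_⟩
  induction w with
  | inl x' => exact absurd hbw not_inr_le_inl
  | inr y => exact inr.le_iff_le.2 (inl_le_inr.1 hxw)

theorem isLeast_inr_join {bY : β} (hbY : IsBot bY) (y : β) :
    IsLeast {w : Cyl σ hσ | inr y ≤ w ∧ inr bY ≤ w} (inr y) :=
  ⟨⟨le_rfl, inr.le_iff_le.2 (hbY y)⟩, fun _ hw => hw.1⟩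

theorem joinAdmissible_inr {bY : β} (hbY : IsBot bY) : JoinAdmissible (inr bY : Cyl σ hσ) := by
  intro z
  induction z with
  | inl x => exact ⟨_, isLeast_inl_join hbY x⟩
  | inr y => exact ⟨_, isLeast_inr_join hbY y⟩

variable {ρX : α → ℤ} {ρY : β → ℤ}

theorem rank_eq_of_inl_covBy_inr (hss : StronglySurjective ρX ρY σ) {x : α} {y : β}
    (h : (inl x : Cyl σ hσ) ⋖ inr y) : ρX x = ρY y := by
  obtain ⟨x', hxx', hρ, rfl⟩ := hss.2 x y (inl_le_inr.1 h.le)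
  obtain rfl : x = x' := hxx'.eq_or_lt.resolve_right fun hlt =>
    h.2 (inl.lt_iff_lt.2 hlt) (lt_of_le_not_ge (inl_le_inr.2 le_rfl) not_inr_le_inl)
  exact hρ

theorem isRankFunction_cylRank (hX : IsRankFunction ρX) (hY : IsRankFunction ρY)
    (hss : StronglySurjective ρX ρY σ) : IsRankFunction (α := Cyl σ hσ) (cylRank ρX ρY) := by
  intro z z' h
  induction z with
  | inl x =>
    induction z' with
    | inl x' => simpa using hX (inl_covBy_inl_iff.1 h)
    | inr y => simpa using (rank_eq_of_inl_covBy_inr hss h).symm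
  | inr y =>
    induction z' with
    | inl x => exact absurd h.le not_inr_le_inl
    | inr y' => simpa using hY (inr_covBy_inr_iff.1 h)

variable [Finite α] [Finite β]

theorem intervalEulerSum_cylRank (z z' : Cyl σ hσ) :
    intervalEulerSum (α := Cyl σ hσ) (cylRank ρX ρY) z z' =
      ∑ᶠ x ∈ inl ⁻¹' Icc z z', (-1 : ℚ) ^ ρX x - ∑ᶠ y ∈ inr ⁻¹' Icc z z', (-1 : ℚ) ^ ρY y := by
  have hsplit : inl '' (inl ⁻¹' Icc z z') ∪ inr '' (inr ⁻¹' Icc z z') = Icc z z' := by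
    ext w
    induction w with
    | inl x => simp
    | inr y => simp
  have hdisj : Disjoint (inl '' (inl ⁻¹' Icc z z') : Set (Cyl σ hσ)) (inr '' (inr ⁻¹' Icc z z')) :=
    disjoint_left.2 fun _ ⟨_, _, hx⟩ ⟨_, _, hy⟩ => inr_ne_inl (hy.trans hx.symm)
  refine (intervalEulerSum_eq_finsum_mem_Icc _ z z').trans ?_
  conv_lhs => rw [← hsplit, finsum_mem_union hdisj (toFinite _) (toFinite _),
    finsum_mem_image inl.injective.injOn, finsum_mem_image inr.injective.injOn]
  simp only [cylRank_inl, cylRank_inr, zpow_add_one₀ (by norm_num : (-1 : ℚ) ≠ 0), mul_neg_one]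
  rw [finsum_mem_neg_distrib _ (toFinite _), sub_eq_add_neg]

theorem intervalEulerSum_cylRank_eq_zero
    (hX : ∀ x x' : α, x < x' → intervalEulerSum ρX x x' = 0)
    (hY : ∀ y y' : β, y < y' → intervalEulerSum ρY y y' = 0)
    (hsub : StrongFormalSubdivision ρX ρY σ) {z z' : Cyl σ hσ} (h : z < z') :
    intervalEulerSum (α := Cyl σ hσ) (cylRank ρX ρY) z z' = 0 := by
  rw [intervalEulerSum_cylRank]
  induction z with
  | inl x =>
    induction z' with
    | inl x' =>
      have hempty : inr ⁻¹' Icc (inl x) (inl x' : Cyl σ hσ) = ∅ :=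
        eq_empty_of_forall_notMem fun _ hy => not_inr_le_inl hy.2
      rw [inl.preimage_Icc, hempty, finsum_mem_empty, sub_zero]
      exact hX x x' (inl.lt_iff_lt.1 h)
    | inr y => exact sub_eq_zero.2 (hsub.finsum_neg_one_zpow_eq_intervalEulerSum x y)
  | inr y =>
    induction z' with
    | inl x => exact absurd h.le not_inr_le_inl
    | inr y' =>
      have hempty : inl ⁻¹' Icc (inr y) (inr y' : Cyl σ hσ) = ∅ :=
        eq_empty_of_forall_notMem fun _ hx => not_inr_le_inl hx.1
      rw [inr.preimage_Icc, hempty, finsum_mem_empty, zero_sub, neg_eq_zero]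
      exact hY y y' (inr.lt_iff_lt.1 h)

end Cyl

/-- The non-Hausdorff mapping cylinder of a strong formal subdivision
`σ : X → Y`, with rank function `ρ_X` on `X` and `ρ_Y + 1` on `Y`, is lower Eulerian with
unique minimal element `0̂_X`; the element `0̂_Y ∈ Y ⊆ Cyl(σ)` is join-admissible and
distinct from the minimal element; `{z : 0̂_Y ≤ z} = Y`; `x ∨ 0̂_Y = σ(x)` for `x ∈ X`; and
`y ∨ 0̂_Y = y` for `y ∈ Y`. -/
theorem cyl_lowerEulerian {X Y : Type*} [PartialOrder X] [PartialOrder Y] [Finite X] [Finite Y]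
    (ρX : X → ℤ) (ρY : Y → ℤ)
    (hX : LowerEulerian ρX) (hY : LowerEulerian ρY)
    (σ : X → Y) (hσ : StrongFormalSubdivision ρX ρY σ)
    (bX : X) (hbX : ∀ x : X, bX ≤ x) (bY : Y) (hbY : ∀ y : Y, bY ≤ y) :
    @LowerEulerian (X ⊕ Y) (cylPartialOrder σ hσ.1) (cylRank ρX ρY) ∧
    (∀ z : X ⊕ Y, cylLE σ (Sum.inl bX) z) ∧
    @JoinAdmissible (X ⊕ Y) (cylPartialOrder σ hσ.1).toPreorder (Sum.inr bY) ∧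
    (Sum.inr bY : X ⊕ Y) ≠ Sum.inl bX ∧
    {z : X ⊕ Y | cylLE σ (Sum.inr bY) z} = Set.range Sum.inr ∧
    (∀ x : X, @IsLeast (X ⊕ Y) (cylPartialOrder σ hσ.1).toPreorder.toLE
      {w : X ⊕ Y | cylLE σ (Sum.inl x) w ∧ cylLE σ (Sum.inr bY) w} (Sum.inr (σ x))) ∧
    (∀ y : Y, @IsLeast (X ⊕ Y) (cylPartialOrder σ hσ.1).toPreorder.toLE
      {w : X ⊕ Y | cylLE σ (Sum.inr y) w ∧ cylLE σ (Sum.inr bY) w} (Sum.inr y)) := by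
  have hbot : IsBot (Cyl.inl bX : Cyl σ hσ.1) := Cyl.isBot_inl hbX hσ.2.2.1.1
  have hlower : LowerEulerian (α := Cyl σ hσ.1) (cylRank ρX ρY) :=
    ⟨Cyl.isRankFunction_cylRank hX.1 hY.1 hσ.2.2.1, ⟨_, hbot⟩,
      fun _ _ => Cyl.intervalEulerSum_cylRank_eq_zero hX.2.2 hY.2.2 hσ⟩
  exact ⟨hlower, hbot, Cyl.joinAdmissible_inr hbY, Sum.inr_ne_inl,
    Cyl.setOf_inr_le_eq_range (hσ := hσ.1) hbY, Cyl.isLeast_inl_join hbY,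
    Cyl.isLeast_inr_join hbY⟩

end SFSPaper
end
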